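/- arXiv:2007.01469 — 6 statements merged into one kernel-verified Lean document; each statement's English description precedes it below -/
import Mathlib

section
/- Let (X,d) be a nonempty separable metric space and let r > 0. Then there exist a countable family of points (x_i)_{i∈I} in X with d(x_i, x_j) > r/2 for i ≠ j, and a family (Q_i)_{i∈I} of pairwise disjoint Borel subsets of X, such that the union of the Q_i is all of X and B(x_i, r/4) ⊆ Q_i ⊆ B(x_i, r) for every i ∈ I. -/
/-!
A maximal `r/2`-separated set of centres is an `r/2`-net of `X`, and it is countable because the
balls of radius `r/4` around its points are disjoint, open and nonempty in a separable space. The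
blocks are the small balls `B(x i, r/4)`, each enlarged by its share of a disjointification, along
an enumeration of the centres, of the big balls `B(x i, r)` with all small balls removed.
-/

open Metric

theorem Set.exists_maximal_pairwise {α : Type*} (r : α → α → Prop) :
    ∃ s : Set α, Maximal (fun t : Set α => t.Pairwise r) s :=
  zorn_subset _ fun c hc hchain =>
    ⟨⋃₀ c, (pairwise_sUnion hchain.directedOn).2 hc, fun _ => subset_sUnion_of_mem⟩

theorem Metric.exists_separated_net {X : Type*} [PseudoMetricSpace X] {ε : ℝ} (hε : 0 ≤ ε) :
    ∃ s : Set X, s.Pairwise (fun a b => ε < dist a b) ∧ ∀ y, ∃ z ∈ s, dist y z ≤ ε := by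
  obtain ⟨s, hs⟩ := Set.exists_maximal_pairwise fun a b : X => ε < dist a b
  refine ⟨s, hs.prop, fun y => ?_⟩
  by_contra! hfar
  have : Std.Symm fun a b : X => ε < dist a b := ⟨fun a b h => by rwa [dist_comm]⟩
  have hy : y ∈ s := hs.mem_of_prop_insert (hs.prop.insert_of_symm fun z hz _ => hfar z hz)
  linarith [hfar y hy, dist_self y]

theorem Set.Pairwise.countable_of_lt_dist {X : Type*} [PseudoMetricSpace X]
    [TopologicalSpace.SeparableSpace X] {s : Set X} {ε : ℝ} (hε : 0 < ε)
    (hs : s.Pairwise fun a b => ε < dist a b) : s.Countable :=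
  PairwiseDisjoint.countable_of_isOpen (s := fun z => ball z (ε / 2))
    (fun _ ha _ hb hab => ball_disjoint_ball (by linarith [hs ha hb hab]))
    (fun _ _ => isOpen_ball) (fun _ _ => nonempty_ball.2 (half_pos hε))

section MeasurablePartition

variable {α ι : Type*} [MeasurableSpace α] [Countable ι]

theorem exists_measurable_pairwise_disjoint_subset_iUnion_eq {B : ι → Set α}
    (hB : ∀ i, MeasurableSet (B i)) :
    ∃ P : ι → Set α, (∀ i, MeasurableSet (P i)) ∧ Pairwise (Function.onFun Disjoint P) ∧
      (∀ i, P i ⊆ B i) ∧ ⋃ i, P i = ⋃ i, B i := by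
  obtain ⟨e, he⟩ := Countable.exists_injective_nat ι
  set C : ℕ → Set α := fun n => ⋃ (i) (_ : e i = n), B i
  have hC : ∀ n, MeasurableSet (C n) := fun n =>
    .iUnion fun i => .iUnion fun _ => hB i
  refine ⟨fun i => B i ∩ disjointed C (e i), fun i => (hB i).inter (.disjointed hC _),
    fun i j hij => ?_, fun i => Set.inter_subset_left, ?_⟩
  · exact (disjoint_disjointed C (he.ne hij)).mono Set.inter_subset_right Set.inter_subset_right
  · refine subset_antisymm (Set.iUnion_mono fun i => Set.inter_subset_left) fun y hy => ?_
    have : y ∈ ⋃ n, disjointed C n := by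
      rw [iUnion_disjointed]
      obtain ⟨i, hi⟩ := Set.mem_iUnion.1 hy
      exact Set.mem_iUnion.2 ⟨e i, Set.mem_biUnion rfl hi⟩
    obtain ⟨n, hn⟩ := Set.mem_iUnion.1 this
    obtain ⟨i, rfl, hi⟩ : ∃ i, e i = n ∧ y ∈ B i := by
      simpa [C] using disjointed_subset C n hn
    exact Set.mem_iUnion.2 ⟨i, hi, hn⟩

theorem exists_measurable_partition_between {A B : ι → Set α}
    (hA : ∀ i, MeasurableSet (A i)) (hB : ∀ i, MeasurableSet (B i)) (hAB : ∀ i, A i ⊆ B i)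
    (hAd : Pairwise (Function.onFun Disjoint A)) (hBcov : ⋃ i, B i = Set.univ) :
    ∃ Q : ι → Set α, (∀ i, MeasurableSet (Q i)) ∧ Pairwise (Function.onFun Disjoint Q) ∧
      ⋃ i, Q i = Set.univ ∧ ∀ i, A i ⊆ Q i ∧ Q i ⊆ B i := by
  obtain ⟨P, hPm, hPd, hPB, hPcov⟩ := exists_measurable_pairwise_disjoint_subset_iUnion_eq hB
  set A' := ⋃ j, A j
  refine ⟨fun i => A i ∪ (P i \ A'), fun i => (hA i).union ((hPm i).diff (.iUnion hA)),
    fun i j hij => ?_, ?_, fun i => ⟨Set.subset_union_left,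
      Set.union_subset (hAB i) (Set.sdiff_subset.trans (hPB i))⟩⟩
  · have hAP : ∀ i j, Disjoint (A i) (P j \ A') := fun i _ =>
      Set.disjoint_sdiff_left.mono_right (Set.subset_iUnion A i) |>.symm
    simp only [Function.onFun, Set.disjoint_union_left, Set.disjoint_union_right]
    exact ⟨⟨hAd hij, (hAP j i).symm⟩, hAP i j, (hPd hij).mono Set.sdiff_subset Set.sdiff_subset⟩
  · rw [Set.eq_univ_iff_forall]
    intro y
    by_cases hy : y ∈ A'
    · obtain ⟨i, hi⟩ := Set.mem_iUnion.1 hy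
      exact Set.mem_iUnion.2 ⟨i, .inl hi⟩
    · obtain ⟨i, hi⟩ := Set.mem_iUnion.1 (hPcov ▸ hBcov ▸ Set.mem_univ y)
      exact Set.mem_iUnion.2 ⟨i, .inr ⟨hi, hy⟩⟩

end MeasurablePartition

theorem stmt_3_general {X : Type*} [MetricSpace X]
    [TopologicalSpace.SeparableSpace X] [MeasurableSpace X] [BorelSpace X]
    (r : ℝ) (hr : 0 < r) :
    ∃ (I : Type) (_ : Countable I) (x : I → X) (Q : I → Set X),
      (∀ i j : I, i ≠ j → r / 2 < dist (x i) (x j)) ∧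
      (∀ i, MeasurableSet (Q i)) ∧
      Pairwise (Function.onFun Disjoint Q) ∧
      (⋃ i, Q i) = Set.univ ∧
      ∀ i, Metric.ball (x i) (r / 4) ⊆ Q i ∧ Q i ⊆ Metric.ball (x i) r := by
  obtain ⟨s, hsep, hnet⟩ := exists_separated_net (X := X) (half_pos hr).le
  have : Countable s := (hsep.countable_of_lt_dist (half_pos hr)).to_subtype
  -- `I` must live in `Type`, so the centres are reindexed by a copy of `s` in universe 0.
  have : Small.{0} s := Countable.toSmall s
  let e : s ≃ Shrink.{0} s := equivShrink s
  have : Countable (Shrink.{0} s) := .of_equiv _ e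
  let x : Shrink.{0} s → X := fun i => e.symm i
  have hxsep : ∀ i j, i ≠ j → r / 2 < dist (x i) (x j) := fun i j hij =>
    hsep (e.symm i).2 (e.symm j).2 (Subtype.coe_injective.comp e.symm.injective |>.ne hij)
  have hcov : ⋃ i, ball (x i) r = Set.univ := Set.eq_univ_of_forall fun y => by
    obtain ⟨z, hz, hyz⟩ := hnet y
    refine Set.mem_iUnion.2 ⟨e ⟨z, hz⟩, ?_⟩
    simpa [x] using hyz.trans_lt (half_lt_self hr)
  obtain ⟨Q, hQ⟩ := exists_measurable_partition_between (A := fun i => ball (x i) (r / 4))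
    (fun _ => measurableSet_ball) (fun _ => measurableSet_ball)
    (fun _ => ball_subset_ball (by linarith))
    (fun i j hij => ball_disjoint_ball (by linarith [hxsep i j hij])) hcov
  exact ⟨Shrink.{0} s, inferInstance, x, Q, hxsep, hQ⟩

/-- Existence of an amalgam-block partition: a countable Borel partition `Q i`
with `(r/2)`-separated centers `x i` and `B(x i, r/4) ⊆ Q i ⊆ B(x i, r)`. -/
theorem stmt_3 {X : Type*} [MetricSpace X] [Nonempty X]
    [TopologicalSpace.SeparableSpace X] [MeasurableSpace X] [BorelSpace X]
    (r : ℝ) (hr : 0 < r) :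
    ∃ (I : Type) (_ : Countable I) (x : I → X) (Q : I → Set X),
      (∀ i j : I, i ≠ j → r / 2 < dist (x i) (x j)) ∧
      (∀ i, MeasurableSet (Q i)) ∧
      Pairwise (Function.onFun Disjoint Q) ∧
      (⋃ i, Q i) = Set.univ ∧
      ∀ i, Metric.ball (x i) (r / 4) ⊆ Q i ∧ Q i ⊆ Metric.ball (x i) r :=
  stmt_3_general r hr
end

section
/- Let (X,d) be a metric space and μ a Borel measure on X such that 0 < μ(B(x,ρ)) < ∞ for every x ∈ X, ρ > 0, and satisfying the strong homogeneity property: there are constants C ≥ 1 and n > 0 with μ(B(x,λρ)) ≤ C λ^n μ(B(x,ρ)) for all x ∈ X, ρ > 0, λ ≥ 1. Let r > 0 and let (x_i)_{i∈I} be a countable family of points of X with d(x_i, x_j) > r/2 for all i ≠ j. Then for every s > n there exists a constant C' > 0, depending only on C, n and s, such that for every z ∈ X, ∑_{i∈I} (1 + d(x_i, z)/r)^{−s} ≤ C'. -/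
open Metric MeasureTheory

private lemma aux_calc (C n s : ℝ) (k : ℕ) :
    (2:ℝ) ^ s * (2:ℝ) ^ (-(k:ℝ) * s) * (C * (12 * 2 ^ k) ^ n)
      = 2 ^ s * (C * 12 ^ n) * ((2:ℝ) ^ (n - s)) ^ k := by
  have h2 : (0:ℝ) < 2 := two_pos
  have e1 : ((2:ℝ) ^ (n - s)) ^ k = 2 ^ (-(k:ℝ) * s) * 2 ^ ((k:ℝ) * n) := by
    rw [← Real.rpow_natCast ((2:ℝ) ^ (n - s)) k, ← Real.rpow_mul h2.le,
      ← Real.rpow_add h2]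
    congr 1; ring
  have e2 : (12 * (2:ℝ) ^ k) ^ n = 12 ^ n * 2 ^ ((k:ℝ) * n) := by
    rw [Real.mul_rpow (by norm_num) (by positivity), ← Real.rpow_natCast (2:ℝ) k,
      ← Real.rpow_mul h2.le]
  rw [e1, e2]; ring

/-- In a space satisfying the strong homogeneity property with dimension `n`,
for `s > n` the sums `∑_i (1 + d(x_i,z)/r)^{-s}` over an `(r/2)`-separated
countable family are bounded by a constant depending only on `C`, `n` and `s`. -/
theorem stmt_5 (C n s : ℝ) (hC : 1 ≤ C) (hn : 0 < n) (hs : n < s) :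
    ∃ C' : ℝ, 0 < C' ∧
      ∀ (X : Type) [MetricSpace X] [MeasurableSpace X] [BorelSpace X]
        (μ : Measure X),
        (∀ (x : X) (ρ : ℝ), 0 < ρ → 0 < μ (ball x ρ)) →
        (∀ (x : X) (ρ : ℝ), 0 < ρ → μ (ball x ρ) < ⊤) →
        (∀ (x : X) (ρ lam : ℝ), 0 < ρ → 1 ≤ lam →
          μ (ball x (lam * ρ)) ≤ ENNReal.ofReal (C * lam ^ n) * μ (ball x ρ)) →
        ∀ (r : ℝ), 0 < r →
        ∀ (I : Type) (_ : Countable I) (x : I → X),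
          (∀ i j : I, i ≠ j → r / 2 < dist (x i) (x j)) →
          ∀ z : X,
            ∑' i : I, ENNReal.ofReal ((1 + dist (x i) z / r) ^ (-s)) ≤
              ENNReal.ofReal C' := by
  have h2 : (0:ℝ) < 2 := two_pos
  set a : ℝ := 2 ^ (n - s) with ha_def
  have ha0 : 0 < a := Real.rpow_pos_of_pos h2 _
  have ha1 : a < 1 := Real.rpow_lt_one_of_one_lt_of_neg one_lt_two (by linarith)
  have hC0 : (0:ℝ) < C := lt_of_lt_of_le one_pos hC
  have hpos' : (0:ℝ) < 2 ^ s * (C * 12 ^ n) * (1 - a)⁻¹ :=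
    mul_pos (mul_pos (Real.rpow_pos_of_pos h2 s)
      (mul_pos hC0 (Real.rpow_pos_of_pos (by norm_num) n))) (inv_pos.mpr (by linarith))
  refine ⟨2 ^ s * (C * 12 ^ n) * (1 - a)⁻¹, hpos', ?_⟩
  intro X _ _ _ μ hpos hfin hhom r hr I hI x hsep z
  set w : ℕ → ENNReal := fun k => ENNReal.ofReal ((2:ℝ) ^ s * (2:ℝ) ^ (-(k:ℝ) * s))
    with hw
  set S : ℕ → Set I := fun k => {i | dist (x i) z < 2 ^ k * r} with hS
  -- Step 1 : pointwise bound by a dyadic sum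
  have step1 : ∀ i : I, ENNReal.ofReal ((1 + dist (x i) z / r) ^ (-s)) ≤
      ∑' k : ℕ, (S k).indicator (fun _ => w k) i := by
    intro i
    set t : ℝ := 1 + dist (x i) z / r with ht
    have ht1 : (1:ℝ) ≤ t := le_add_of_nonneg_right (by positivity)
    have ht0 : (0:ℝ) < t := lt_of_lt_of_le one_pos ht1
    clear_value t
    set k : ℕ := ⌈Real.logb 2 t⌉₊ with hk
    have hlogb0 : 0 ≤ Real.logb 2 t := Real.logb_nonneg one_lt_two ht1
    have htk : t ≤ 2 ^ (k:ℝ) := by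
      calc t = 2 ^ Real.logb 2 t := (Real.rpow_logb h2 (by norm_num) ht0).symm
        _ ≤ 2 ^ (k:ℝ) := Real.rpow_le_rpow_of_exponent_le one_le_two (Nat.le_ceil _)
    have hmem : i ∈ S k := by
      have h1 : dist (x i) z / r < 2 ^ (k:ℝ) := by linarith
      have h1' : dist (x i) z < 2 ^ (k:ℝ) * r := (div_lt_iff₀ hr).mp h1
      show dist (x i) z < 2 ^ k * r
      rwa [Real.rpow_natCast] at h1'
    have hval : t ^ (-s) ≤ (2:ℝ) ^ s * 2 ^ (-(k:ℝ) * s) := by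
      have hk2 : (2:ℝ) ^ (k:ℝ) ≤ 2 * t := by
        have h1 : (k:ℝ) ≤ Real.logb 2 t + 1 := (Nat.ceil_lt_add_one hlogb0).le
        calc (2:ℝ) ^ (k:ℝ) ≤ 2 ^ (Real.logb 2 t + 1) :=
              Real.rpow_le_rpow_of_exponent_le one_le_two h1
          _ = 2 * t := by
              rw [Real.rpow_add h2, Real.rpow_logb h2 (by norm_num) ht0,
                Real.rpow_one]; ring
      have hmono : (2 * t) ^ (-s) ≤ ((2:ℝ) ^ (k:ℝ)) ^ (-s) :=
        Real.rpow_le_rpow_of_nonpos (by positivity) hk2 (by linarith)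
      have hmul : (2 * t) ^ (-s) = 2 ^ (-s) * t ^ (-s) := Real.mul_rpow h2.le ht0.le
      have h2k : ((2:ℝ) ^ (k:ℝ)) ^ (-s) = 2 ^ (-(k:ℝ) * s) := by
        rw [← Real.rpow_mul h2.le]; ring_nf
      rw [hmul, h2k] at hmono
      have hss : (2:ℝ) ^ s * 2 ^ (-s) = 1 := by
        rw [← Real.rpow_add h2]; simp
      have h3 := mul_le_mul_of_nonneg_left hmono (Real.rpow_pos_of_pos h2 s).le
      calc t ^ (-s) = 2 ^ s * (2 ^ (-s) * t ^ (-s)) := by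
            rw [← mul_assoc, hss, one_mul]
        _ ≤ 2 ^ s * 2 ^ (-(k:ℝ) * s) := h3
    calc ENNReal.ofReal (t ^ (-s)) ≤ w k := ENNReal.ofReal_le_ofReal hval
      _ = (S k).indicator (fun _ => w k) i := (Set.indicator_of_mem hmem fun _ => w k).symm
      _ ≤ ∑' k' : ℕ, (S k').indicator (fun _ => w k') i := ENNReal.le_tsum k
  -- Step 2 : counting points in each annulus via the measure
  have step2 : ∀ k : ℕ, ∑' i : I, (S k).indicator (fun _ => (1:ENNReal)) i ≤
      ENNReal.ofReal (C * (12 * 2 ^ k) ^ n) := by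
    intro k
    set R : ℝ := 2 ^ k * r with hR
    have h2k1 : (1:ℝ) ≤ 2 ^ k := one_le_pow₀ one_le_two
    have hRr : r ≤ R := by nlinarith
    have hR0 : 0 < R := lt_of_lt_of_le hr hRr
    set M : ENNReal := μ (ball z (2 * R)) with hM
    have hM0 : M ≠ 0 := (hpos z (2 * R) (by linarith)).ne'
    have hMtop : M ≠ ⊤ := (hfin z (2 * R) (by linarith)).ne
    set K : ENNReal := ENNReal.ofReal (C * (12 * 2 ^ k) ^ n) with hK
    have hper : ∀ i : I, i ∈ S k → M ≤ K * μ (ball (x i) (r / 4)) := by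
      intro i hi
      have hd : dist (x i) z < R := hi
      have hsub : ball z (2 * R) ⊆ ball (x i) ((12 * 2 ^ k) * (r / 4)) := by
        intro y hy
        simp only [mem_ball] at hy ⊢
        have h312 : (12 * (2:ℝ) ^ k) * (r / 4) = 3 * R := by rw [hR]; ring
        rw [h312]
        have htri := dist_triangle y z (x i)
        have hzz : dist z (x i) = dist (x i) z := dist_comm _ _
        linarith
      calc M ≤ μ (ball (x i) ((12 * 2 ^ k) * (r / 4))) := measure_mono hsub
        _ ≤ K * μ (ball (x i) (r / 4)) :=
            hhom (x i) (r / 4) (12 * 2 ^ k) (by linarith) (by nlinarith)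
    have hdisj : ∑' (i : S k), μ (ball (x (i : I)) (r / 4)) ≤ M := by
      have hpd : Pairwise (Function.onFun Disjoint
          fun i : S k => ball (x (i : I)) (r / 4)) := by
        intro i j hij
        apply ball_disjoint_ball
        have hne : (i : I) ≠ (j : I) := Subtype.coe_ne_coe.mpr hij
        have := hsep _ _ hne
        linarith
      rw [← measure_iUnion hpd fun i => measurableSet_ball]
      apply measure_mono
      intro y hy
      simp only [Set.mem_iUnion, mem_ball] at hy ⊢
      obtain ⟨i, hyi⟩ := hy
      have hd : dist (x (i : I)) z < R := i.2
      calc dist y z ≤ dist y (x (i : I)) + dist (x (i : I)) z := dist_triangle _ _ _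
        _ < r / 4 + R := by linarith
        _ ≤ 2 * R := by linarith
    calc ∑' i : I, (S k).indicator (fun _ => (1:ENNReal)) i
        = ∑' (i : S k), (1:ENNReal) := (tsum_subtype (S k) _).symm
      _ ≤ ∑' (i : S k), K * μ (ball (x (i : I)) (r / 4)) / M := by
          apply ENNReal.tsum_le_tsum
          intro i
          rw [ENNReal.le_div_iff_mul_le (Or.inl hM0) (Or.inl hMtop), one_mul]
          exact hper i i.2
      _ = K * ((∑' (i : S k), μ (ball (x (i : I)) (r / 4))) * M⁻¹) := by
          simp only [div_eq_mul_inv, mul_assoc]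
          rw [ENNReal.tsum_mul_left, ENNReal.tsum_mul_right]
      _ ≤ K * (M * M⁻¹) := by
          gcongr
      _ = K := by rw [ENNReal.mul_inv_cancel hM0 hMtop, mul_one]
  -- Step 3 : assemble
  calc ∑' i : I, ENNReal.ofReal ((1 + dist (x i) z / r) ^ (-s))
      ≤ ∑' i : I, ∑' k : ℕ, (S k).indicator (fun _ => w k) i :=
        ENNReal.tsum_le_tsum step1
    _ = ∑' k : ℕ, ∑' i : I, (S k).indicator (fun _ => w k) i := ENNReal.tsum_comm
    _ = ∑' k : ℕ, w k * ∑' i : I, (S k).indicator (fun _ => (1:ENNReal)) i := by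
        congr 1
        funext k
        rw [ENNReal.tsum_mul_left.symm]
        congr 1
        funext i
        by_cases hi : i ∈ S k
        · rw [Set.indicator_of_mem hi, Set.indicator_of_mem hi, mul_one]
        · rw [Set.indicator_of_notMem hi, Set.indicator_of_notMem hi, mul_zero]
    _ ≤ ∑' k : ℕ, w k * ENNReal.ofReal (C * (12 * 2 ^ k) ^ n) := by
        apply ENNReal.tsum_le_tsum
        intro k
        exact mul_le_mul_right (step2 k) _
    _ = ∑' k : ℕ, ENNReal.ofReal (2 ^ s * (C * 12 ^ n) * a ^ k) := by
        congr 1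
        funext k
        rw [hw]
        rw [← ENNReal.ofReal_mul (by positivity), aux_calc C n s k]
    _ = ENNReal.ofReal (2 ^ s * (C * 12 ^ n)) * ∑' k : ℕ, (ENNReal.ofReal a) ^ k := by
        rw [← ENNReal.tsum_mul_left]
        congr 1
        funext k
        rw [ENNReal.ofReal_mul (by positivity), ENNReal.ofReal_pow ha0.le]
    _ = ENNReal.ofReal (2 ^ s * (C * 12 ^ n)) * ENNReal.ofReal ((1 - a)⁻¹) := by
        rw [ENNReal.tsum_geometric, ← ENNReal.ofReal_one,
          ← ENNReal.ofReal_sub 1 ha0.le, ← ENNReal.ofReal_inv_of_pos (by linarith)]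
    _ = ENNReal.ofReal (2 ^ s * (C * 12 ^ n) * (1 - a)⁻¹) :=
        (ENNReal.ofReal_mul (by positivity)).symm
end

section
/- Let (X,d) be a metric space and μ a Borel measure on X such that 0 < μ(B(x,ρ)) < ∞ for every x ∈ X, ρ > 0, and satisfying the strong homogeneity property: there are constants C ≥ 1 and n > 0 with μ(B(x,λρ)) ≤ C λ^n μ(B(x,ρ)) for all x ∈ X, ρ > 0, λ ≥ 1. Let 1 ≤ p₀ ≤ p < ∞, let y ∈ X and r > 0, and let f be a measurable function on X vanishing outside the ball B(y,r). Then ( ∫_X μ(B(z,r))^{(1/p − 1/p₀) p₀} |f(z)|^{p₀} dμ(z) )^{1/p₀} ≤ (C 2^n)^{1/p₀ − 1/p} ( ∫_X |f(z)|^p dμ(z) )^{1/p}. -/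
/-!
For `z ∈ B := B(y,r)` we have `B ⊆ B(z,2r)`, so doubling gives `μ B ≤ C 2^n μ(B(z,r))`. The
exponent of the weight is nonpositive, hence on the support of `f` the weight is at most
`(μ B / C 2^n)^{1/p - 1/p₀}`. Hölder's inequality on `B` gives
`‖f‖_{p₀} ≤ μ(B)^{1/p₀ - 1/p} ‖f‖_p`, and the two powers of `μ B` cancel.
-/

open Metric MeasureTheory
open scoped ENNReal

theorem measure_ball_le_mul_measure_ball_of_mem {X : Type*} [PseudoMetricSpace X]
    [MeasurableSpace X] (μ : Measure X) {K : ℝ≥0∞} {r : ℝ} {y z : X}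
    (hdouble : μ (ball z (2 * r)) ≤ K * μ (ball z r)) (hz : z ∈ ball y r) :
    μ (ball y r) ≤ K * μ (ball z r) := by
  refine le_trans (measure_mono (ball_subset_ball' ?_)) hdouble
  rw [mem_ball'] at hz
  linarith

theorem lintegral_rpow_neg_mul_le_of_le_on {α : Type*} [MeasurableSpace α] {μ : Measure α}
    {W g : α → ℝ≥0∞} {s : Set α} {c : ℝ≥0∞} {a : ℝ} (ha : 0 ≤ a)
    (hW : ∀ z ∈ s, c ≤ W z) (hg : ∀ z ∉ s, g z = 0) (hgm : AEMeasurable g μ) :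
    ∫⁻ z, W z ^ (-a) * g z ∂μ ≤ c ^ (-a) * ∫⁻ z, g z ∂μ := by
  rw [← lintegral_const_mul'' _ hgm]
  refine lintegral_mono fun z => ?_
  by_cases hz : z ∈ s
  · refine mul_le_mul_left ?_ _
    rw [ENNReal.rpow_neg, ENNReal.rpow_neg]
    exact ENNReal.inv_le_inv.2 (ENNReal.rpow_le_rpow (hW z hz) ha)
  · simp [hg z hz]

theorem lintegral_ofReal_norm_rpow_eq_eLpNorm_rpow {α E : Type*} [MeasurableSpace α]
    [NormedAddCommGroup E] (μ : Measure α) (f : α → E) {p : ℝ} (hp : 0 < p) :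
    ∫⁻ z, ENNReal.ofReal (‖f z‖ ^ p) ∂μ = eLpNorm f (ENNReal.ofReal p) μ ^ p := by
  rw [eLpNorm_eq_eLpNorm' (by simpa using hp) ENNReal.ofReal_ne_top,
    ENNReal.toReal_ofReal hp.le, ← lintegral_rpow_enorm_eq_rpow_eLpNorm' hp]
  simp_rw [← ENNReal.ofReal_rpow_of_nonneg (norm_nonneg _) hp.le, ofReal_norm]

theorem eLpNorm_le_eLpNorm_mul_rpow_measure_of_support_subset {α E : Type*}
    [MeasurableSpace α] [NormedAddCommGroup E] {μ : Measure α} {f : α → E} {s : Set α}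
    {p q : ℝ≥0∞} (hpq : p ≤ q) (hf : AEStronglyMeasurable f μ) (hsf : f.support ⊆ s) :
    eLpNorm f p μ ≤ eLpNorm f q μ * μ s ^ (1 / p.toReal - 1 / q.toReal) := by
  rw [← eLpNorm_restrict_eq_of_support_subset hsf,
    ← eLpNorm_restrict_eq_of_support_subset (p := q) hsf, ← Measure.restrict_apply_univ]
  exact eLpNorm_le_eLpNorm_mul_rpow_measure_univ hpq hf.restrict

theorem stmt_7_general {X : Type*} [MetricSpace X] [MeasurableSpace X]
    (μ : Measure X) (C n : ℝ) (hC : 1 ≤ C)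
    (hpos : ∀ (x : X) (ρ : ℝ), 0 < ρ → 0 < μ (ball x ρ))
    (hfin : ∀ (x : X) (ρ : ℝ), 0 < ρ → μ (ball x ρ) < ⊤)
    (hH : ∀ (x : X) (ρ lam : ℝ), 0 < ρ → 1 ≤ lam →
      μ (ball x (lam * ρ)) ≤ ENNReal.ofReal (C * lam ^ n) * μ (ball x ρ))
    (p₀ p : ℝ) (hp₀ : 1 ≤ p₀) (hp₀p : p₀ ≤ p)
    (y : X) (r : ℝ) (hr : 0 < r)
    (f : X → ℂ) (hf : Measurable f)
    (hsupp : ∀ z : X, z ∉ ball y r → f z = 0) :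
    (∫⁻ z, μ (ball z r) ^ ((1 / p - 1 / p₀) * p₀) *
        ENNReal.ofReal (‖f z‖ ^ p₀) ∂μ) ^ (1 / p₀) ≤
      ENNReal.ofReal ((C * 2 ^ n) ^ (1 / p₀ - 1 / p)) *
        (∫⁻ z, ENNReal.ofReal (‖f z‖ ^ p) ∂μ) ^ (1 / p) := by
  have hp₀_pos : 0 < p₀ := by linarith
  have hp_pos : 0 < p := by linarith
  set a := 1 / p₀ - 1 / p
  have ha : 0 ≤ a := sub_nonneg.2 (one_div_le_one_div_of_le hp₀_pos hp₀p)
  have hK_pos : 0 < C * 2 ^ n := by positivity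
  set K := ENNReal.ofReal (C * 2 ^ n)
  set w := μ (ball y r)
  have hw0 : w ≠ 0 := (hpos y r hr).ne'
  have hw_top : w ≠ ⊤ := (hfin y r hr).ne
  have hball : ∀ z ∈ ball y r, w / K ≤ μ (ball z r) := fun z hz =>
    ENNReal.div_le_of_le_mul'
      (measure_ball_le_mul_measure_ball_of_mem μ (hH z r 2 hr one_le_two) hz)
  have hweighted := lintegral_rpow_neg_mul_le_of_le_on (μ := μ)
    (g := fun z => ENNReal.ofReal (‖f z‖ ^ p₀)) (mul_nonneg ha hp₀_pos.le) hball
    (fun z hz => by simp [hsupp z hz, Real.zero_rpow hp₀_pos.ne'])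
    (hf.norm.pow_const p₀).ennreal_ofReal.aemeasurable
  have hHolder := eLpNorm_le_eLpNorm_mul_rpow_measure_of_support_subset (μ := μ)
    (ENNReal.ofReal_le_ofReal hp₀p) hf.aestronglyMeasurable
    (Function.support_subset_iff'.2 hsupp)
  rw [ENNReal.toReal_ofReal hp₀_pos.le, ENNReal.toReal_ofReal hp_pos.le] at hHolder
  rw [lintegral_ofReal_norm_rpow_eq_eLpNorm_rpow μ f hp₀_pos] at hweighted
  rw [lintegral_ofReal_norm_rpow_eq_eLpNorm_rpow μ f hp_pos, ← ENNReal.rpow_mul,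
    mul_one_div_cancel hp_pos.ne', ENNReal.rpow_one,
    show (1 / p - 1 / p₀) * p₀ = -(a * p₀) by ring]
  have hcancel : (w / K) ^ (-a) * w ^ a = K ^ a := by
    rw [ENNReal.rpow_neg, ← ENNReal.inv_rpow, ENNReal.inv_div (.inr hw_top) (.inr hw0),
      ← ENNReal.mul_rpow_of_nonneg _ _ ha, ENNReal.div_mul_cancel hw0 hw_top]
  calc _ ≤ ((w / K) ^ (-(a * p₀)) * eLpNorm f (.ofReal p₀) μ ^ p₀) ^ (1 / p₀) := by
        gcongr
    _ = (w / K) ^ (-a) * eLpNorm f (.ofReal p₀) μ := by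
        rw [ENNReal.mul_rpow_of_nonneg _ _ (by positivity), ← ENNReal.rpow_mul,
          ← ENNReal.rpow_mul, mul_one_div_cancel hp₀_pos.ne', ENNReal.rpow_one,
          show -(a * p₀) * (1 / p₀) = -a by field_simp]
    _ ≤ (w / K) ^ (-a) * (eLpNorm f (.ofReal p) μ * w ^ a) := by gcongr
    _ = K ^ a * eLpNorm f (.ofReal p) μ := by rw [mul_left_comm, hcancel, mul_comm]
    _ = _ := by rw [ENNReal.ofReal_rpow_of_pos hK_pos]

/-- Multiplication by the weight `μ(B(·,r))^{1/p - 1/p₀}` maps `L^p` functions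
supported in a ball of radius `r` boundedly into `L^{p₀}`. -/
theorem stmt_7 {X : Type*} [MetricSpace X] [MeasurableSpace X] [BorelSpace X]
    (μ : Measure X) (C n : ℝ) (hC : 1 ≤ C) (hn : 0 < n)
    (hpos : ∀ (x : X) (ρ : ℝ), 0 < ρ → 0 < μ (ball x ρ))
    (hfin : ∀ (x : X) (ρ : ℝ), 0 < ρ → μ (ball x ρ) < ⊤)
    (hH : ∀ (x : X) (ρ lam : ℝ), 0 < ρ → 1 ≤ lam →
      μ (ball x (lam * ρ)) ≤ ENNReal.ofReal (C * lam ^ n) * μ (ball x ρ))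
    (p₀ p : ℝ) (hp₀ : 1 ≤ p₀) (hp₀p : p₀ ≤ p)
    (y : X) (r : ℝ) (hr : 0 < r)
    (f : X → ℂ) (hf : Measurable f)
    (hsupp : ∀ z : X, z ∉ ball y r → f z = 0) :
    (∫⁻ z, μ (ball z r) ^ ((1 / p - 1 / p₀) * p₀) *
        ENNReal.ofReal (‖f z‖ ^ p₀) ∂μ) ^ (1 / p₀) ≤
      ENNReal.ofReal ((C * 2 ^ n) ^ (1 / p₀ - 1 / p)) *
        (∫⁻ z, ENNReal.ofReal (‖f z‖ ^ p) ∂μ) ^ (1 / p) :=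
  stmt_7_general μ C n hC hpos hfin hH p₀ p hp₀ hp₀p y r hr f hf hsupp
end

section
/- Let A be a Banach algebra (a complete normed ring) over ℝ or ℂ, with exponential defined by the power series exp(a) = ∑_{k≥0} a^k / k!. Then for all a, b ∈ A, b·exp(a) − exp(a)·b = ∫₀¹ exp(s a) · (b a − a b) · exp((1−s) a) ds, where the integral is the Bochner integral of the continuous A-valued function s ↦ exp(s a)(ba − ab)exp((1−s)a) over [0,1]. -/
/-!
The function `f s = exp (s • a) * b * exp ((t - s) • a)` has derivative
`-exp (s • a) * (b * a - a * b) * exp ((t - s) • a)`, since `a` commutes with its own exponentials;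
the formula is the fundamental theorem of calculus for `f` on `[0, t]`. Over `𝕜`, one first views `A`
as a real Banach algebra through the scalar tower `ℝ → 𝕜 → A`.
-/

open intervalIntegral NormedSpace

/-- Unlike `NormedAlgebra.restrictScalars`, this keeps the given `R`-action on `A`, so it is
compatible with the instance `[NormedSpace R A]`. -/
abbrev NormedAlgebra.ofIsScalarTower (R 𝕜 A : Type*) [NormedField R] [CommSemiring 𝕜]
    [Algebra R 𝕜] [NormedRing A] [Algebra 𝕜 A] [NormedSpace R A] [IsScalarTower R 𝕜 A] :
    NormedAlgebra R A :=
  { Algebra.ofModule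
      (fun r x y => by
        rw [← algebraMap_smul 𝕜 r x, ← algebraMap_smul 𝕜 r (x * y), smul_mul_assoc])
      (fun r x y => by
        rw [← algebraMap_smul 𝕜 r y, ← algebraMap_smul 𝕜 r (x * y), mul_smul_comm]) with
    norm_smul_le := NormedSpace.norm_smul_le }

section Duhamel

variable {A : Type*} [NormedRing A] [NormedAlgebra ℝ A] [CompleteSpace A]

theorem hasDerivAt_exp_smul_mul_mul_exp_sub_smul (a b : A) (t s : ℝ) :
    HasDerivAt (fun u : ℝ => exp (u • a) * b * exp ((t - u) • a))
      (-(exp (s • a) * (b * a - a * b) * exp ((t - s) • a))) s := by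
  have hright : HasDerivAt (fun u : ℝ => exp ((t - u) • a)) (-(a * exp ((t - s) • a))) s := by
    simpa [Function.comp_def] using
      (hasDerivAt_exp_smul_const' a (t - s)).scomp s ((hasDerivAt_id s).const_sub t)
  exact (((hasDerivAt_exp_smul_const a s).mul_const b).mul hright).congr_deriv (by noncomm_ring)

theorem continuous_exp_smul_mul_mul_exp_sub_smul (a b : A) (t : ℝ) :
    Continuous fun s : ℝ => exp (s • a) * b * exp ((t - s) • a) := by
  have hexp : Continuous fun s : ℝ => exp (s • a) :=
    continuous_iff_continuousAt.2 fun s => (hasDerivAt_exp_smul_const a s).continuousAt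
  exact (hexp.mul continuous_const).mul (hexp.comp (continuous_sub_left t))

theorem commutator_exp_smul_eq_integral (a b : A) (t : ℝ) :
    b * exp (t • a) - exp (t • a) * b =
      ∫ s in (0 : ℝ)..t, exp (s • a) * (b * a - a * b) * exp ((t - s) • a) := by
  have hFTC := integral_eq_sub_of_hasDerivAt
    (fun s _ => hasDerivAt_exp_smul_mul_mul_exp_sub_smul a b t s)
    ((continuous_exp_smul_mul_mul_exp_sub_smul a (b * a - a * b) t).neg.intervalIntegrable 0 t)
  rw [integral_neg, neg_eq_iff_eq_neg] at hFTC
  simp [hFTC]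

end Duhamel

/-- Duhamel-type commutator formula in a Banach algebra:
`b·exp(a) − exp(a)·b = ∫₀¹ exp(s a)(ba − ab)exp((1−s)a) ds`. -/
theorem stmt_8 {𝕜 : Type*} [RCLike 𝕜] {A : Type*} [NormedRing A] [NormedAlgebra 𝕜 A]
    [CompleteSpace A] [NormedSpace ℝ A] [IsScalarTower ℝ 𝕜 A] (a b : A) :
    b * NormedSpace.exp a - NormedSpace.exp a * b =
      ∫ s in (0:ℝ)..1,
        NormedSpace.exp (s • a) * (b * a - a * b) *
          NormedSpace.exp ((1 - s) • a) := by
  let := NormedAlgebra.ofIsScalarTower ℝ 𝕜 A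
  simpa only [one_smul] using commutator_exp_smul_eq_integral a b 1
end

section
/- Let (X,d) be a metric space and μ a Borel measure on X such that 0 < μ(B(x,ρ)) < ∞ for every x ∈ X, ρ > 0, and satisfying the strong homogeneity property: there are constants C ≥ 1 and n > 0 with μ(B(x,λρ)) ≤ C λ^n μ(B(x,ρ)) for all x ∈ X, ρ > 0, λ ≥ 1. Let ρ > 0, a > 0, A > 0, and let h : X × X → ℂ be measurable with |h(w,z)| ≤ A · μ(B(w,ρ))^{−1} (1 + d(w,z)/ρ)^{−n−a} for all w, z ∈ X. Then there exists a constant C' > 0, depending only on C, n and a, such that for all x, y ∈ X and all f, g ∈ L²(X,μ), ∫_{B(x,ρ)} ∫_{B(y,ρ)} |h(w,z)| |f(z)| |g(w)| dμ(z) dμ(w) ≤ C' A (1 + d(x,y)/ρ)^{−a} ‖f‖_{L²} ‖g‖_{L²}. -/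
/-!
On `B(x,ρ) × B(y,ρ)` the kernel is bounded by `C 2ⁿ 3ⁿ⁺ᵃ A μ(B(x,ρ))⁻¹ (1 + d(x,y)/ρ)^(-n-a)`:
the triangle inequality gives `1 + d(x,y)/ρ ≤ 3 (1 + d(w,z)/ρ)`, and since `B(x,ρ) ⊆ B(w,2ρ)`
homogeneity compares `μ(B(w,ρ))` with `μ(B(x,ρ))`. With this uniform bound the bilinear form is
controlled by `‖f‖_{L¹(B(y,ρ))} ‖g‖_{L¹(B(x,ρ))} ≤ μ(B(y,ρ))^½ μ(B(x,ρ))^½ ‖f‖₂ ‖g‖₂`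
(Cauchy–Schwarz). Finally `B(y,ρ) ⊆ B(x, (1 + d(x,y)/ρ) ρ)`, so homogeneity bounds
`μ(B(y,ρ))` by `C (1 + d(x,y)/ρ)ⁿ μ(B(x,ρ))`, and the decay `(1 + d(x,y)/ρ)^(-n-a)` absorbs the
resulting factor `(1 + d(x,y)/ρ)^(n/2)`, leaving `(1 + d(x,y)/ρ)^(-a)`.
-/

open Metric MeasureTheory

theorem setLIntegral_enorm_le_measure_rpow_mul_eLpNorm {X E : Type*} [MeasurableSpace X]
    [NormedAddCommGroup E] {μ : Measure X} (s : Set X) {f : X → E}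
    (hf : AEStronglyMeasurable f μ) :
    ∫⁻ z in s, ‖f z‖ₑ ∂μ ≤ μ s ^ (1 / 2 : ℝ) * eLpNorm f 2 μ := by
  have h := eLpNorm_le_eLpNorm_mul_rpow_measure_univ (μ := μ.restrict s) (p := 1) (q := 2)
    one_le_two hf.restrict
  rw [eLpNorm_one_eq_lintegral_enorm, Measure.restrict_apply_univ] at h
  calc ∫⁻ z in s, ‖f z‖ₑ ∂μ ≤ eLpNorm f 2 (μ.restrict s) * μ s ^ (1 / 2 : ℝ) := by
        convert h using 3; norm_num
    _ ≤ eLpNorm f 2 μ * μ s ^ (1 / 2 : ℝ) := by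
        gcongr ?_ * _; exact eLpNorm_restrict_le f 2 μ s
    _ = μ s ^ (1 / 2 : ℝ) * eLpNorm f 2 μ := mul_comm _ _

theorem lintegral_setLIntegral_le_of_norm_le {X E F G : Type*} [MeasurableSpace X]
    [NormedAddCommGroup E] [NormedAddCommGroup F] [NormedAddCommGroup G] {μ : Measure X}
    {s t : Set X} (hs : MeasurableSet s) (ht : MeasurableSet t) {h : X × X → G}
    {f : X → E} {g : X → F} (hf : AEStronglyMeasurable f μ) (hg : AEStronglyMeasurable g μ)
    {M : ℝ} (hM : ∀ w ∈ s, ∀ z ∈ t, ‖h (w, z)‖ ≤ M) :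
    ∫⁻ w in s, ∫⁻ z in t, ENNReal.ofReal (‖h (w, z)‖ * ‖f z‖ * ‖g w‖) ∂μ ∂μ ≤
      ENNReal.ofReal M * μ t ^ (1 / 2 : ℝ) * μ s ^ (1 / 2 : ℝ) * eLpNorm f 2 μ *
        eLpNorm g 2 μ := by
  have hpointwise : ∀ w ∈ s, ∫⁻ z in t, ENNReal.ofReal (‖h (w, z)‖ * ‖f z‖ * ‖g w‖) ∂μ ≤
      ∫⁻ z in t, ENNReal.ofReal M * ‖g w‖ₑ * ‖f z‖ₑ ∂μ := by
    refine fun w hw => setLIntegral_mono' ht fun z hz => ?_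
    have hM0 : 0 ≤ M := (norm_nonneg _).trans (hM w hw z hz)
    rw [← ofReal_norm, ← ofReal_norm, ← ENNReal.ofReal_mul hM0,
      ← ENNReal.ofReal_mul (by positivity)]
    gcongr ENNReal.ofReal ?_
    calc ‖h (w, z)‖ * ‖f z‖ * ‖g w‖ ≤ M * ‖f z‖ * ‖g w‖ := by gcongr; exact hM w hw z hz
      _ = M * ‖g w‖ * ‖f z‖ := by ring
  calc ∫⁻ w in s, ∫⁻ z in t, ENNReal.ofReal (‖h (w, z)‖ * ‖f z‖ * ‖g w‖) ∂μ ∂μ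
      ≤ ∫⁻ w in s, ∫⁻ z in t, ENNReal.ofReal M * ‖g w‖ₑ * ‖f z‖ₑ ∂μ ∂μ :=
        setLIntegral_mono' hs hpointwise
    _ = ENNReal.ofReal M * (∫⁻ w in s, ‖g w‖ₑ ∂μ) * ∫⁻ z in t, ‖f z‖ₑ ∂μ := by
        rw [lintegral_lintegral_mul (hg.restrict.enorm.const_mul _) hf.restrict.enorm,
          lintegral_const_mul'' _ hg.restrict.enorm]
    _ ≤ ENNReal.ofReal M * (μ s ^ (1 / 2 : ℝ) * eLpNorm g 2 μ) *
          (μ t ^ (1 / 2 : ℝ) * eLpNorm f 2 μ) := by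
        gcongr <;> exact setLIntegral_enorm_le_measure_rpow_mul_eLpNorm _ ‹_›
    _ = _ := by ring

theorem Real.rpow_half_mul_rpow_half_le {b c s : ℝ} (hb : 0 ≤ b) (hc : 0 ≤ c) (hs : 0 ≤ s)
    (h : b ≤ c * s) : b ^ (1 / 2 : ℝ) * s ^ (1 / 2 : ℝ) ≤ c ^ (1 / 2 : ℝ) * s :=
  calc b ^ (1 / 2 : ℝ) * s ^ (1 / 2 : ℝ) ≤ (c * s) ^ (1 / 2 : ℝ) * s ^ (1 / 2 : ℝ) := by gcongr
    _ = c ^ (1 / 2 : ℝ) * s ^ (1 / 2 + 1 / 2 : ℝ) := by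
        rw [Real.mul_rpow hc hs, Real.rpow_add' hs (by norm_num)]; ring
    _ = c ^ (1 / 2 : ℝ) * s := by norm_num

theorem Real.rpow_neg_mul_inv_mul_rpow_half_le {q b s C n a : ℝ} (hq : 1 ≤ q) (hb : 0 ≤ b)
    (hs : 0 < s) (hC : 0 ≤ C) (hn : 0 ≤ n) (h : b ≤ C * q ^ n * s) :
    q ^ (-(n + a)) * s⁻¹ * (b ^ (1 / 2 : ℝ) * s ^ (1 / 2 : ℝ)) ≤ C ^ (1 / 2 : ℝ) * q ^ (-a) :=
  have hq0 : 0 < q := by linarith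
  calc q ^ (-(n + a)) * s⁻¹ * (b ^ (1 / 2 : ℝ) * s ^ (1 / 2 : ℝ))
      ≤ q ^ (-(n + a)) * s⁻¹ * ((C * q ^ n) ^ (1 / 2 : ℝ) * s) := by
        refine mul_le_mul_of_nonneg_left ?_ (by positivity)
        exact Real.rpow_half_mul_rpow_half_le hb (by positivity) hs.le h
    _ = C ^ (1 / 2 : ℝ) * q ^ (-(n + a) + n / 2) := by
        rw [Real.mul_rpow hC (by positivity), ← Real.rpow_mul hq0.le, Real.rpow_add hq0]
        field_simp
    _ ≤ C ^ (1 / 2 : ℝ) * q ^ (-a) := by gcongr; linarith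

theorem rpow_neg_one_add_dist_div_le {X : Type*} [PseudoMetricSpace X] {x y w z : X}
    {ρ s : ℝ} (hρ : 0 < ρ) (hs : 0 ≤ s) (hw : w ∈ ball x ρ) (hz : z ∈ ball y ρ) :
    (1 + dist w z / ρ) ^ (-s) ≤ 3 ^ s * (1 + dist x y / ρ) ^ (-s) := by
  have hle : (1 + dist x y / ρ) / 3 ≤ 1 + dist w z / ρ := by
    rw [mem_ball, dist_comm] at hw
    have hxy : dist x y / ρ ≤ 2 + dist w z / ρ := by
      rw [div_le_iff₀ hρ, add_mul, div_mul_cancel₀ _ hρ.ne']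
      linarith [dist_triangle4 x w z y, mem_ball.mp hz]
    have : 0 ≤ dist w z / ρ := by positivity
    linarith
  calc (1 + dist w z / ρ) ^ (-s) ≤ ((1 + dist x y / ρ) / 3) ^ (-s) :=
        Real.rpow_le_rpow_of_nonpos (by positivity) hle (by linarith)
    _ = 3 ^ s * (1 + dist x y / ρ) ^ (-s) := by
        rw [Real.div_rpow (by positivity) (by norm_num), Real.rpow_neg (by norm_num : (0:ℝ) ≤ 3),
          div_inv_eq_mul, mul_comm]

def StrongHomogeneity {X : Type*} [PseudoMetricSpace X] [MeasurableSpace X] (μ : Measure X)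
    (C n : ℝ) : Prop :=
  ∀ (x : X) (ρ lam : ℝ), 0 < ρ → 1 ≤ lam →
    μ (ball x (lam * ρ)) ≤ ENNReal.ofReal (C * lam ^ n) * μ (ball x ρ)

namespace StrongHomogeneity

variable {X : Type*} [PseudoMetricSpace X] [MeasurableSpace X] {μ : Measure X} {C n ρ : ℝ}

theorem measure_ball_le (hμ : StrongHomogeneity μ C n) {x y : X} {lam : ℝ} (hρ : 0 < ρ)
    (hlam : 1 ≤ lam) (hxy : dist x y ≤ (lam - 1) * ρ) :
    μ (ball y ρ) ≤ ENNReal.ofReal (C * lam ^ n) * μ (ball x ρ) := by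
  refine (measure_mono fun v hv => ?_).trans (hμ x ρ lam hρ hlam)
  rw [mem_ball] at hv ⊢
  linarith [dist_triangle v y x, dist_comm x y]

theorem measureReal_ball_le (hμ : StrongHomogeneity μ C n) (hC : 0 ≤ C) {x y : X} {lam : ℝ}
    (hρ : 0 < ρ) (hlam : 1 ≤ lam) (hxy : dist x y ≤ (lam - 1) * ρ)
    (hx : μ (ball x ρ) ≠ ⊤) :
    μ.real (ball y ρ) ≤ C * lam ^ n * μ.real (ball x ρ) := by
  have h := ENNReal.toReal_mono (by finiteness) (hμ.measure_ball_le hρ hlam hxy)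
  rwa [ENNReal.toReal_mul, ENNReal.toReal_ofReal (by positivity)] at h

theorem inv_measureReal_ball_le (hμ : StrongHomogeneity μ C n) (hC : 0 ≤ C)
    (hpos : ∀ x : X, 0 < μ.real (ball x ρ)) (hρ : 0 < ρ) {x w : X} (hw : w ∈ ball x ρ) :
    (μ.real (ball w ρ))⁻¹ ≤ C * 2 ^ n * (μ.real (ball x ρ))⁻¹ := by
  have h := hμ.measureReal_ball_le hC hρ one_le_two (x := w) (y := x)
    (by rw [mem_ball] at hw; linarith) (ENNReal.toReal_pos_iff.mp (hpos w)).2.ne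
  rw [← div_eq_mul_inv, le_div_iff₀ (hpos x), inv_mul_le_iff₀ (hpos w)]
  exact h.trans_eq (mul_comm _ _)

variable {E F G : Type*} [NormedAddCommGroup E] [NormedAddCommGroup F] [NormedAddCommGroup G]
  {a A : ℝ} {h : X × X → G}

theorem norm_le_of_mem_ball (hμ : StrongHomogeneity μ C n) (hC : 0 ≤ C) (hna : 0 ≤ n + a)
    (hpos : ∀ x : X, 0 < μ.real (ball x ρ)) (hρ : 0 < ρ) (hA : 0 ≤ A)
    (hh : ∀ w z : X, ‖h (w, z)‖ ≤ A * (μ.real (ball w ρ))⁻¹ * (1 + dist w z / ρ) ^ (-(n + a)))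
    {x y w z : X} (hw : w ∈ ball x ρ) (hz : z ∈ ball y ρ) :
    ‖h (w, z)‖ ≤
      C * 2 ^ n * 3 ^ (n + a) * A * (1 + dist x y / ρ) ^ (-(n + a)) * (μ.real (ball x ρ))⁻¹ :=
  calc ‖h (w, z)‖ ≤ A * (μ.real (ball w ρ))⁻¹ * (1 + dist w z / ρ) ^ (-(n + a)) := hh w z
    _ ≤ A * (C * 2 ^ n * (μ.real (ball x ρ))⁻¹) *
          (3 ^ (n + a) * (1 + dist x y / ρ) ^ (-(n + a))) := by
        gcongr
        · exact hμ.inv_measureReal_ball_le hC hpos hρ hw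
        · exact rpow_neg_one_add_dist_div_le hρ hna hw hz
    _ = _ := by ring

theorem lintegral_ball_ball_le [OpensMeasurableSpace X] (hμ : StrongHomogeneity μ C n)
    (hC : 0 ≤ C) (hn : 0 ≤ n) (ha : 0 ≤ a) (hpos : ∀ x : X, 0 < μ.real (ball x ρ))
    (hρ : 0 < ρ) (hA : 0 ≤ A)
    (hh : ∀ w z : X, ‖h (w, z)‖ ≤ A * (μ.real (ball w ρ))⁻¹ * (1 + dist w z / ρ) ^ (-(n + a)))
    {f : X → E} {g : X → F} (hf : AEStronglyMeasurable f μ) (hg : AEStronglyMeasurable g μ)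
    (x y : X) :
    ∫⁻ w in ball x ρ, ∫⁻ z in ball y ρ, ENNReal.ofReal (‖h (w, z)‖ * ‖f z‖ * ‖g w‖) ∂μ ∂μ ≤
      ENNReal.ofReal
          (C * 2 ^ n * 3 ^ (n + a) * C ^ (1 / 2 : ℝ) * A * (1 + dist x y / ρ) ^ (-a)) *
        eLpNorm f 2 μ * eLpNorm g 2 μ := by
  have hne_top : ∀ v : X, μ (ball v ρ) ≠ ⊤ := fun v => (ENNReal.toReal_pos_iff.mp (hpos v)).2.ne
  have hfin : ∀ v : X, μ (ball v ρ) = ENNReal.ofReal (μ.real (ball v ρ)) := fun v =>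
    (ofReal_measureReal (hne_top v)).symm
  refine (lintegral_setLIntegral_le_of_norm_le measurableSet_ball measurableSet_ball hf hg
    fun w hw z hz => hμ.norm_le_of_mem_ball hC (by linarith) hpos hρ hA hh hw hz).trans ?_
  gcongr ?_ * _ * _
  rw [hfin x, hfin y, ENNReal.ofReal_rpow_of_nonneg measureReal_nonneg (by norm_num),
    ENNReal.ofReal_rpow_of_nonneg measureReal_nonneg (by norm_num), ← ENNReal.ofReal_mul,
    ← ENNReal.ofReal_mul]
  · refine ENNReal.ofReal_le_ofReal ?_
    set q := 1 + dist x y / ρ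
    have hq : 1 ≤ q := by simp only [q, le_add_iff_nonneg_right]; positivity
    have hy : μ.real (ball y ρ) ≤ C * q ^ n * μ.real (ball x ρ) :=
      hμ.measureReal_ball_le hC hρ hq (by simp [q, hρ.ne']) (hne_top x)
    calc C * 2 ^ n * 3 ^ (n + a) * A * q ^ (-(n + a)) * (μ.real (ball x ρ))⁻¹ *
          μ.real (ball y ρ) ^ (1 / 2 : ℝ) * μ.real (ball x ρ) ^ (1 / 2 : ℝ)
        = C * 2 ^ n * 3 ^ (n + a) * A * (q ^ (-(n + a)) * (μ.real (ball x ρ))⁻¹ *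
            (μ.real (ball y ρ) ^ (1 / 2 : ℝ) * μ.real (ball x ρ) ^ (1 / 2 : ℝ))) := by ring
      _ ≤ C * 2 ^ n * 3 ^ (n + a) * A * (C ^ (1 / 2 : ℝ) * q ^ (-a)) := by
          refine mul_le_mul_of_nonneg_left ?_ (by positivity)
          exact Real.rpow_neg_mul_inv_mul_rpow_half_le hq measureReal_nonneg (hpos x) hC hn hy
      _ = _ := by ring
  all_goals positivity

end StrongHomogeneity

/-- `L² → L²` off-diagonal estimate, expressed through its bilinear form, for an
integral operator whose kernel satisfies the Poisson-type pointwise upper bound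
`|h(w,z)| ≤ A μ(B(w,ρ))⁻¹ (1 + d(w,z)/ρ)^{-n-a}`. -/
theorem stmt_15 (C n a : ℝ) (hC : 1 ≤ C) (hn : 0 < n) (ha : 0 < a) :
    ∃ C' : ℝ, 0 < C' ∧
      ∀ (X : Type) [MetricSpace X] [MeasurableSpace X] [BorelSpace X]
        (μ : Measure X),
        (∀ (x : X) (ρ : ℝ), 0 < ρ → 0 < μ (ball x ρ)) →
        (∀ (x : X) (ρ : ℝ), 0 < ρ → μ (ball x ρ) < ⊤) →
        (∀ (x : X) (ρ lam : ℝ), 0 < ρ → 1 ≤ lam →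
          μ (ball x (lam * ρ)) ≤ ENNReal.ofReal (C * lam ^ n) * μ (ball x ρ)) →
        ∀ (ρ A : ℝ), 0 < ρ → 0 < A →
          ∀ h : X × X → ℂ, Measurable h →
            (∀ w z : X, ‖h (w, z)‖ ≤
                A * (μ (ball w ρ)).toReal⁻¹ * (1 + dist w z / ρ) ^ (-(n + a))) →
            ∀ (x y : X) (f g : X → ℂ), MemLp f 2 μ → MemLp g 2 μ →
              (∫⁻ w in ball x ρ, ∫⁻ z in ball y ρ,
                  ENNReal.ofReal (‖h (w, z)‖ * ‖f z‖ * ‖g w‖) ∂μ ∂μ) ≤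
                ENNReal.ofReal (C' * A * (1 + dist x y / ρ) ^ (-a)) *
                  eLpNorm f 2 μ * eLpNorm g 2 μ := by
  have hC0 : 0 < C := by linarith
  refine ⟨C * 2 ^ n * 3 ^ (n + a) * C ^ (1 / 2 : ℝ), by positivity, ?_⟩
  intro X _ _ _ μ hpos hfin hμ ρ A hρ hA h _ hh x y f g hf hg
  have hpos_real : ∀ v : X, 0 < μ.real (ball v ρ) := fun v =>
    ENNReal.toReal_pos (hpos v ρ hρ).ne' (hfin v ρ hρ).ne
  exact StrongHomogeneity.lintegral_ball_ball_le hμ hC0.le hn.le ha.le hpos_real hρ hA.le hh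
    hf.aestronglyMeasurable hg.aestronglyMeasurable x y
end

section
/- Let (Ω, μ) be a σ-finite measure space, let 1 ≤ p ≤ q < ∞, and let T : L^p(μ) → L^q(μ) be a bounded linear operator. Let (Q_i)_{i∈ℕ} be pairwise disjoint measurable subsets of Ω whose union is Ω. For indices i, j define N_{ij} = sup { ‖1_{Q_i} · (T f)‖_{L^q} : f ∈ L^p(μ), f = 0 a.e. outside Q_j, ‖f‖_{L^p} ≤ 1 } (the operator norm of χ_{Q_i} T χ_{Q_j}). Then the operator norm of T satisfies ‖T‖_{L^p → L^q} ≤ sup_j ∑_i N_{ij} + sup_i ∑_j N_{ij} (the inequality being interpreted in [0,∞]). -/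
/-!
Cut `f` into the pieces `fⱼ = 1_{Qⱼ} f`; since `p < ∞` the series `∑ⱼ fⱼ` converges to `f` in `Lᵖ`,
so `‖1_{Qᵢ} T f‖_q ≤ ∑ⱼ Nᵢⱼ aⱼ` with `aⱼ = ‖fⱼ‖_p`. This is the setting of the discrete Schur test:
weighted Hölder gives `(∑ⱼ Nᵢⱼ aⱼ)^q ≤ (∑ⱼ Nᵢⱼ)^(q-1) ∑ⱼ Nᵢⱼ aⱼ^q`, and summing over `i` yields
`‖T f‖_q^q ≤ B^(q-1) A ∑ⱼ aⱼ^q ≤ (A + B)^q ∑ⱼ aⱼ^q`, where `A`, `B` are the column and row sup-sums.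
Finally `∑ⱼ aⱼ^q ≤ (∑ⱼ aⱼ^p)^(q/p) = ‖f‖_p^q` because `ℓᵖ ⊆ ℓ^q` contractively for `p ≤ q`.
-/

open MeasureTheory Function
open scoped ENNReal

namespace ENNReal

lemma rpow_sub_one_mul_self {t : ℝ} (ht : 1 ≤ t) (x : ℝ≥0∞) : x ^ (t - 1) * x = x ^ t := by
  have htpos : 0 < t := zero_lt_one.trans_le ht
  rcases eq_or_ne x 0 with rfl | h0
  · simp [zero_rpow_of_pos htpos]
  rcases eq_or_ne x ∞ with rfl | htop
  · rcases ht.eq_or_lt with rfl | h1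
    · simp
    · rw [top_rpow_of_pos htpos, top_rpow_of_pos (by linarith), top_mul_top]
  · nth_rewrite 2 [← rpow_one x]
    rw [← rpow_add _ _ h0 htop, sub_add_cancel]

lemma tsum_rpow_le_rpow_tsum {ι : Type*} {t : ℝ} (ht : 1 ≤ t) (y : ι → ℝ≥0∞) :
    ∑' j, y j ^ t ≤ (∑' j, y j) ^ t :=
  calc ∑' j, y j ^ t ≤ ∑' j, (∑' k, y k) ^ (t - 1) * y j := by
        refine ENNReal.tsum_le_tsum fun j => ?_
        rw [← rpow_sub_one_mul_self ht (y j)]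
        gcongr
        exact ENNReal.le_tsum j
    _ = (∑' j, y j) ^ t := by rw [ENNReal.tsum_mul_left, rpow_sub_one_mul_self ht]

lemma tsum_rpow_le_rpow_tsum_rpow {ι : Type*} {p r : ℝ} (hp : 0 < p) (hpr : p ≤ r)
    (a : ι → ℝ≥0∞) : ∑' j, a j ^ r ≤ (∑' j, a j ^ p) ^ (r / p) := by
  have hmul : p * (r / p) = r := mul_div_cancel₀ r hp.ne'
  calc ∑' j, a j ^ r = ∑' j, (a j ^ p) ^ (r / p) := by simp_rw [← ENNReal.rpow_mul, hmul]
    _ ≤ (∑' j, a j ^ p) ^ (r / p) :=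
      tsum_rpow_le_rpow_tsum ((one_le_div hp).2 hpr) _

lemma rpow_tsum_mul_le {ι : Type*} {r : ℝ} (hr : 1 ≤ r) (w a : ι → ℝ≥0∞) :
    (∑' j, w j * a j) ^ r ≤ (∑' j, w j) ^ (r - 1) * ∑' j, w j * a j ^ r := by
  have hr0 : 0 < r := zero_lt_one.trans_le hr
  have hholder : ∑' j, w j * a j ≤ (∑' j, w j) ^ (1 - r⁻¹) * (∑' j, w j * a j ^ r) ^ r⁻¹ := by
    rw [ENNReal.tsum_eq_iSup_sum]
    refine iSup_le fun s => (inner_le_weight_mul_Lp_of_nonneg s hr w a).trans ?_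
    gcongr
    · exact sub_nonneg.2 (inv_le_one_of_one_le₀ hr)
    all_goals exact ENNReal.sum_le_tsum s
  calc (∑' j, w j * a j) ^ r
      ≤ ((∑' j, w j) ^ (1 - r⁻¹) * (∑' j, w j * a j ^ r) ^ r⁻¹) ^ r := by gcongr
    _ = (∑' j, w j) ^ (r - 1) * ∑' j, w j * a j ^ r := by
      rw [mul_rpow_of_nonneg _ _ hr0.le, ← rpow_mul, ← rpow_mul, inv_mul_cancel₀ hr0.ne',
        rpow_one, sub_mul, inv_mul_cancel₀ hr0.ne', one_mul]

lemma tsum_rpow_le_of_le_tsum_mul {ι κ : Type*} {r : ℝ} (hr : 1 ≤ r) (N : ι → κ → ℝ≥0∞)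
    {a : κ → ℝ≥0∞} {b : ι → ℝ≥0∞} (hb : ∀ i, b i ≤ ∑' j, N i j * a j) :
    ∑' i, b i ^ r ≤ ((⨆ j, ∑' i, N i j) + ⨆ i, ∑' j, N i j) ^ r * ∑' j, a j ^ r := by
  set A := ⨆ j, ∑' i, N i j
  set B := ⨆ i, ∑' j, N i j
  calc ∑' i, b i ^ r ≤ ∑' i, (∑' j, N i j) ^ (r - 1) * ∑' j, N i j * a j ^ r :=
        ENNReal.tsum_le_tsum fun i => ((rpow_le_rpow (hb i) (by linarith)).trans
          (rpow_tsum_mul_le hr _ _))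
    _ ≤ ∑' i, B ^ (r - 1) * ∑' j, N i j * a j ^ r := by
        gcongr with i
        exact le_iSup (fun i => ∑' j, N i j) i
    _ = B ^ (r - 1) * ∑' j, (∑' i, N i j) * a j ^ r := by
        simp_rw [ENNReal.tsum_mul_left, ← ENNReal.tsum_mul_right]
        rw [ENNReal.tsum_comm]
    _ ≤ B ^ (r - 1) * ∑' j, A * a j ^ r := by
        gcongr with j
        exact le_iSup (fun j => ∑' i, N i j) j
    _ ≤ (A + B) ^ (r - 1) * (A + B) * ∑' j, a j ^ r := by
        rw [ENNReal.tsum_mul_left, ← mul_assoc]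
        gcongr
        exacts [le_add_self, le_self_add]
    _ = (A + B) ^ r * ∑' j, a j ^ r := by rw [rpow_sub_one_mul_self hr]

end ENNReal

lemma Set.compl_biUnion_eq_iUnion_notMem {α ι : Type*} {s : ι → Set α}
    (hd : Pairwise (Disjoint on s)) (hcover : ⋃ i, s i = Set.univ) (t : Finset ι) :
    (⋃ i ∈ t, s i)ᶜ = ⋃ i : {i // i ∉ t}, s i := by
  ext x
  obtain ⟨k, hk⟩ := Set.mem_iUnion.1 (hcover ▸ Set.mem_univ x)
  have hmem : ∀ i, x ∈ s i ↔ i = k := fun i =>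
    ⟨fun hi => by_contra fun hik => Set.disjoint_left.1 (hd hik) hi hk, fun h => h ▸ hk⟩
  simp [hmem]

section Partition

variable {Ω E : Type*} [MeasurableSpace Ω] {μ : Measure Ω} [NormedAddCommGroup E] {p : ℝ≥0∞}

lemma eLpNorm_rpow_toReal_eq_lintegral (hp0 : p ≠ 0) (hp : p ≠ ∞) (g : Ω → E) :
    eLpNorm g p μ ^ p.toReal = ∫⁻ x, ‖g x‖ₑ ^ p.toReal ∂μ := by
  rw [eLpNorm_eq_lintegral_rpow_enorm_toReal hp0 hp, ← ENNReal.rpow_mul, one_div,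
    inv_mul_cancel₀ (ENNReal.toReal_pos hp0 hp).ne', ENNReal.rpow_one]

lemma eLpNorm_restrict_iUnion_rpow_toReal {ι : Type*} [Countable ι] {s : ι → Set Ω}
    (hs : ∀ i, MeasurableSet (s i)) (hd : Pairwise (Disjoint on s)) (hp0 : p ≠ 0) (hp : p ≠ ∞)
    (g : Ω → E) :
    eLpNorm g p (μ.restrict (⋃ i, s i)) ^ p.toReal
      = ∑' i, eLpNorm g p (μ.restrict (s i)) ^ p.toReal := by
  simp only [eLpNorm_rpow_toReal_eq_lintegral hp0 hp]
  exact lintegral_iUnion hs hd _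

lemma eLpNorm_rpow_toReal_eq_tsum_restrict {ι : Type*} [Countable ι] {s : ι → Set Ω}
    (hs : ∀ i, MeasurableSet (s i)) (hd : Pairwise (Disjoint on s)) (hcover : ⋃ i, s i = Set.univ)
    (hp0 : p ≠ 0) (hp : p ≠ ∞) (g : Ω → E) :
    eLpNorm g p μ ^ p.toReal = ∑' i, eLpNorm g p (μ.restrict (s i)) ^ p.toReal := by
  rw [← eLpNorm_restrict_iUnion_rpow_toReal hs hd hp0 hp, hcover, Measure.restrict_univ]

end Partition

namespace MeasureTheory.Lp

variable {Ω E : Type*} [MeasurableSpace Ω] {μ : Measure Ω} [NormedAddCommGroup E] {p : ℝ≥0∞}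

noncomputable def indicator {s : Set Ω} (hs : MeasurableSet s) (f : Lp E p μ) : Lp E p μ :=
  ((Lp.memLp f).indicator hs).toLp (s.indicator f)

lemma coeFn_indicator {s : Set Ω} (hs : MeasurableSet s) (f : Lp E p μ) :
    ⇑(indicator hs f) =ᵐ[μ] s.indicator f :=
  MemLp.coeFn_toLp _

lemma enorm_indicator {s : Set Ω} (hs : MeasurableSet s) (f : Lp E p μ) :
    ‖indicator hs f‖ₑ = eLpNorm f p (μ.restrict s) := by
  rw [Lp.enorm_def, eLpNorm_congr_ae (coeFn_indicator hs f),
    eLpNorm_indicator_eq_eLpNorm_restrict hs]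

lemma hasSum_indicator [Fact (1 ≤ p)] (hp : p ≠ ∞) {ι : Type*} [Countable ι]
    {s : ι → Set Ω} (hs : ∀ i, MeasurableSet (s i)) (hd : Pairwise (Disjoint on s))
    (hcover : ⋃ i, s i = Set.univ) (f : Lp E p μ) :
    HasSum (fun i => indicator (hs i) f) f := by
  have hp0 : p ≠ 0 := (zero_lt_one.trans_le Fact.out).ne'
  have hc : ∑' i, eLpNorm f p (μ.restrict (s i)) ^ p.toReal ≠ ∞ := by
    rw [← eLpNorm_rpow_toReal_eq_tsum_restrict hs hd hcover hp0 hp]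
    exact ENNReal.rpow_ne_top_of_nonneg ENNReal.toReal_nonneg (Lp.eLpNorm_ne_top f)
  have htail : ∀ t : Finset ι, eLpNorm (⇑(∑ i ∈ t, indicator (hs i) f) - ⇑f) p μ
      = (∑' i : {i // i ∉ t}, eLpNorm f p (μ.restrict (s i)) ^ p.toReal) ^ p.toReal⁻¹ := by
    intro t
    have hae : ⇑(∑ i ∈ t, indicator (hs i) f) - ⇑f =ᵐ[μ] -(⋃ i ∈ t, s i)ᶜ.indicator f := by
      filter_upwards [Lp.coeFn_finsetSum t fun i => indicator (hs i) f,
        ae_all_iff.2 fun i => coeFn_indicator (hs i) f] with x hsum hind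
      rw [Pi.sub_apply, hsum, Finset.sum_apply, Pi.neg_apply, Set.indicator_compl, Pi.sub_apply,
        Finset.indicator_biUnion_apply _ _ (hd.set_pairwise _), neg_sub]
      simp only [hind]
    rw [eLpNorm_congr_ae hae, eLpNorm_neg,
      eLpNorm_indicator_eq_eLpNorm_restrict (Finset.measurableSet_biUnion t fun i _ => hs i).compl,
      Set.compl_biUnion_eq_iUnion_notMem hd hcover,
      ← eLpNorm_restrict_iUnion_rpow_toReal (s := fun i : {i // i ∉ t} => s i) (fun i => hs i)
        (fun i j hij => hd (Subtype.coe_injective.ne hij)) hp0 hp,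
      ENNReal.rpow_rpow_inv (ENNReal.toReal_pos hp0 hp).ne']
  refine (Lp.tendsto_Lp_iff_tendsto_eLpNorm' _ f).2 ?_
  simp_rw [htail]
  simpa [ENNReal.zero_rpow_of_pos, ENNReal.toReal_pos hp0 hp] using
    (ENNReal.tendsto_tsum_compl_atTop_zero hc).ennrpow_const p.toReal⁻¹

end MeasureTheory.Lp

lemma ContinuousLinearMap.enorm_apply_le_mul_of_forall_le {𝕜 E G : Type*} [RCLike 𝕜]
    [NormedAddCommGroup E] [NormedSpace 𝕜 E] [NormedAddCommGroup G] [NormedSpace 𝕜 G]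
    (L : E →L[𝕜] G) {P : E → Prop} (hP : ∀ (c : 𝕜) f, P f → P (c • f)) {C : ℝ≥0∞}
    (hC : ∀ g, P g → ‖g‖ ≤ 1 → ‖L g‖ₑ ≤ C) {f : E} (hf : P f) : ‖L f‖ₑ ≤ C * ‖f‖ₑ := by
  rcases eq_or_ne f 0 with rfl | hf0
  · simp
  have hnorm : ‖f‖ ≠ 0 := norm_ne_zero_iff.2 hf0
  set c : 𝕜 := ((‖f‖⁻¹ : ℝ) : 𝕜)
  have hc : ‖c • f‖ = 1 := by
    rw [norm_smul, RCLike.norm_ofReal, abs_inv, abs_norm, inv_mul_cancel₀ hnorm]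
  have hcf : ‖c‖ₑ * ‖f‖ₑ = 1 := by
    rw [← enorm_smul, ← ofReal_norm, hc, ENNReal.ofReal_one]
  calc ‖L f‖ₑ = ‖L (c • f)‖ₑ * ‖f‖ₑ := by
        rw [map_smul, enorm_smul, mul_comm, ← mul_assoc, mul_comm ‖f‖ₑ, hcf, one_mul]
    _ ≤ C * ‖f‖ₑ := by gcongr; exact hC _ (hP c f hf) hc.le

lemma MeasureTheory.enorm_LpToLpRestrictCLM {Ω F : Type*} (𝕜 : Type*) [MeasurableSpace Ω]
    {μ : Measure Ω} [NormedAddCommGroup F] [NormedField 𝕜] [NormedSpace 𝕜 F] {p : ℝ≥0∞}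
    [Fact (1 ≤ p)] (s : Set Ω) (f : Lp F p μ) :
    ‖LpToLpRestrictCLM Ω F 𝕜 μ p s f‖ₑ = eLpNorm f p (μ.restrict s) := by
  rw [Lp.enorm_def, eLpNorm_congr_ae (LpToLpRestrictCLM_coeFn 𝕜 s f)]

namespace MeasureTheory

variable {Ω E F 𝕜 : Type*} [MeasurableSpace Ω] {μ : Measure Ω} [NormedAddCommGroup E]
  [NormedAddCommGroup F] [NormedField 𝕜] [NormedSpace 𝕜 E] [NormedSpace 𝕜 F] {p q : ℝ≥0∞}
  [Fact (1 ≤ p)] [Fact (1 ≤ q)]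

lemma enorm_apply_le_of_block_le (hpq : p ≤ q) (hq : q ≠ ∞)
    (T : Lp E p μ →L[𝕜] Lp F q μ) {ι : Type*} [Countable ι] {Q : ι → Set Ω}
    (hQ : ∀ i, MeasurableSet (Q i)) (hd : Pairwise (Disjoint on Q)) (hcover : ⋃ i, Q i = Set.univ)
    (N : ι → ι → ℝ≥0∞)
    (hN : ∀ i j f, eLpNorm (T (Lp.indicator (hQ j) f)) q (μ.restrict (Q i))
      ≤ N i j * eLpNorm f p (μ.restrict (Q j)))
    (f : Lp E p μ) : ‖T f‖ₑ ≤ ((⨆ j, ∑' i, N i j) + ⨆ i, ∑' j, N i j) * ‖f‖ₑ := by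
  have hp : p ≠ ∞ := ne_top_of_le_ne_top hq hpq
  have hp0 : p ≠ 0 := (zero_lt_one.trans_le Fact.out).ne'
  have hq0 : q ≠ 0 := (zero_lt_one.trans_le Fact.out).ne'
  have hblock : ∀ i, eLpNorm (T f) q (μ.restrict (Q i))
      ≤ ∑' j, N i j * eLpNorm f p (μ.restrict (Q j)) := by
    intro i
    let R := LpToLpRestrictCLM Ω F 𝕜 μ q (Q i)
    have hsum := (Lp.hasSum_indicator hp hQ hd hcover f).mapL (R.comp T)
    calc eLpNorm (T f) q (μ.restrict (Q i)) = ‖∑' j, R.comp T (Lp.indicator (hQ j) f)‖ₑ := by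
          rw [hsum.tsum_eq, ContinuousLinearMap.comp_apply, enorm_LpToLpRestrictCLM]
      _ ≤ ∑' j, ‖R (T (Lp.indicator (hQ j) f))‖ₑ := enorm_tsum_le_tsum_enorm
      _ ≤ ∑' j, N i j * eLpNorm f p (μ.restrict (Q j)) := by
          simp_rw [R, enorm_LpToLpRestrictCLM]
          exact ENNReal.tsum_le_tsum (hN i · f)
  have hq_pos : 0 < q.toReal := ENNReal.toReal_pos hq0 hq
  have hq_one : 1 ≤ q.toReal := by simpa using ENNReal.toReal_mono hq (Fact.out : 1 ≤ q)
  refine (ENNReal.rpow_le_rpow_iff hq_pos).1 ?_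
  calc ‖T f‖ₑ ^ q.toReal = ∑' i, eLpNorm (T f) q (μ.restrict (Q i)) ^ q.toReal := by
        rw [Lp.enorm_def, eLpNorm_rpow_toReal_eq_tsum_restrict hQ hd hcover hq0 hq]
    _ ≤ ((⨆ j, ∑' i, N i j) + ⨆ i, ∑' j, N i j) ^ q.toReal
          * ∑' j, eLpNorm f p (μ.restrict (Q j)) ^ q.toReal :=
        ENNReal.tsum_rpow_le_of_le_tsum_mul hq_one N hblock
    _ ≤ ((⨆ j, ∑' i, N i j) + ⨆ i, ∑' j, N i j) ^ q.toReal * ‖f‖ₑ ^ q.toReal := by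
        gcongr
        calc ∑' j, eLpNorm f p (μ.restrict (Q j)) ^ q.toReal
            ≤ (∑' j, eLpNorm f p (μ.restrict (Q j)) ^ p.toReal) ^ (q.toReal / p.toReal) :=
              ENNReal.tsum_rpow_le_rpow_tsum_rpow (ENNReal.toReal_pos hp0 hp)
                (ENNReal.toReal_mono hq hpq) _
          _ = ‖f‖ₑ ^ q.toReal := by
              rw [Lp.enorm_def, ← eLpNorm_rpow_toReal_eq_tsum_restrict hQ hd hcover hp0 hp,
                ← ENNReal.rpow_mul, mul_div_cancel₀ _ (ENNReal.toReal_pos hp0 hp).ne']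
    _ = (((⨆ j, ∑' i, N i j) + ⨆ i, ∑' j, N i j) * ‖f‖ₑ) ^ q.toReal :=
        (ENNReal.mul_rpow_of_nonneg _ _ hq_pos.le).symm

end MeasureTheory

theorem stmt_17_general {Ω : Type*} [MeasurableSpace Ω] (μ : Measure Ω)
    (p q : ℝ≥0∞) [Fact (1 ≤ p)] [Fact (1 ≤ q)] (hpq : p ≤ q) (hq : q ≠ ⊤)
    (T : Lp ℂ p μ →L[ℂ] Lp ℂ q μ)
    (Q : ℕ → Set Ω) (hQmeas : ∀ i, MeasurableSet (Q i))
    (hQdisj : Pairwise (Function.onFun Disjoint Q))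
    (hQcover : (⋃ i, Q i) = Set.univ)
    (N : ℕ → ℕ → ℝ≥0∞)
    (hN : ∀ i j, N i j =
      ⨆ f ∈ {f : Lp ℂ p μ | (∀ᵐ z ∂μ, z ∉ Q j → f z = 0) ∧ ‖f‖ ≤ 1},
        eLpNorm ((Q i).indicator (⇑(T f))) q μ) :
    (‖T‖₊ : ℝ≥0∞) ≤ (⨆ j, ∑' i, N i j) + ⨆ i, ∑' j, N i j := by
  refine T.opENorm_le_bound fun f =>
    enorm_apply_le_of_block_le hpq hq T hQmeas hQdisj hQcover N (fun i j f => ?_) f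
  let R := (LpToLpRestrictCLM Ω ℂ ℂ μ q (Q i)).comp T
  have hR : ∀ g, ‖R g‖ₑ = eLpNorm (T g) q (μ.restrict (Q i)) := fun g => by
    rw [ContinuousLinearMap.comp_apply, enorm_LpToLpRestrictCLM]
  rw [← hR, ← Lp.enorm_indicator (hQmeas j)]
  refine R.enorm_apply_le_mul_of_forall_le (P := fun g => ∀ᵐ z ∂μ, z ∉ Q j → g z = 0)
    (fun c g hg => ?_) (fun g hg hg1 => ?_) ?_
  · filter_upwards [Lp.coeFn_smul c g, hg] with z hz hgz hzQ
    rw [hz, Pi.smul_apply, hgz hzQ, smul_zero]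
  · simp only [hN, eLpNorm_indicator_eq_eLpNorm_restrict (hQmeas i), ← hR]
    exact le_iSup₂ (f := fun g _ => ‖R g‖ₑ) g ⟨hg, hg1⟩
  · filter_upwards [Lp.coeFn_indicator (hQmeas j) f] with z hz hzQ
    rw [hz, Set.indicator_of_notMem hzQ]

/-- Criterion for the `L^p → L^q` operator norm in terms of localizations to a
countable measurable partition:
`‖T‖ ≤ sup_j ∑_i N_{ij} + sup_i ∑_j N_{ij}`. -/
theorem stmt_17 {Ω : Type*} [MeasurableSpace Ω] (μ : Measure Ω) [SigmaFinite μ]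
    (p q : ℝ≥0∞) [Fact (1 ≤ p)] [Fact (1 ≤ q)] (hpq : p ≤ q) (hq : q ≠ ⊤)
    (T : Lp ℂ p μ →L[ℂ] Lp ℂ q μ)
    (Q : ℕ → Set Ω) (hQmeas : ∀ i, MeasurableSet (Q i))
    (hQdisj : Pairwise (Function.onFun Disjoint Q))
    (hQcover : (⋃ i, Q i) = Set.univ)
    (N : ℕ → ℕ → ℝ≥0∞)
    (hN : ∀ i j, N i j =
      ⨆ f ∈ {f : Lp ℂ p μ | (∀ᵐ z ∂μ, z ∉ Q j → f z = 0) ∧ ‖f‖ ≤ 1},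
        eLpNorm ((Q i).indicator (⇑(T f))) q μ) :
    (‖T‖₊ : ℝ≥0∞) ≤ (⨆ j, ∑' i, N i j) + ⨆ i, ∑' j, N i j :=
  stmt_17_general μ p q hpq hq T Q hQmeas hQdisj hQcover N hN
end
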